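/- arXiv:2404.04056 — 3 statements merged into one kernel-verified Lean document; each statement's English description precedes it below -/
import Mathlib

section
/- Let p > q ≥ 2 be coprime integers, and let t, h be integers with 0 < t < p, 0 < h < q, and h·p − t·q = 1. Let S = {k : 1 ≤ k ≤ p and k ≡ 1 − i·q (mod p) for some 0 ≤ i < t}. Then the number of elements k of S with k ≤ q equals h, i.e., |S ∩ {1, …, q}| = (t·q + 1)/p = h. -/
/-!
Write `k - 1 + i q = j p`. For `1 ≤ k ≤ q` and `0 ≤ i < t` this gives `0 ≤ j p < t q + 1 = h p`,
so `0 ≤ j < h`, and `k - 1 = j p mod q`; conversely `k = 1 + (j p mod q)` with `0 ≤ j < h` comes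
from `i = ⌊j p / q⌋`. Hence the elements of `S` up to `q` are the values `1 + (j p mod q)`,
`0 ≤ j < h`, and these are distinct because `p` is invertible modulo `q` and `h < q`.
-/

theorem Int.injOn_mul_emod_Ico {p q : ℤ} (hpq : IsCoprime p q) :
    Set.InjOn (fun j => j * p % q) (Set.Ico 0 q) := by
  rintro a ⟨ha0, haq⟩ b ⟨hb0, hbq⟩ hab
  have hdvd : q ∣ (b - a) * p := by
    rw [sub_mul]
    exact Int.ModEq.dvd hab
  have hmod : a % q = b % q := (Int.modEq_iff_dvd.mpr (hpq.symm.dvd_of_dvd_mul_right hdvd)).eq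
  rwa [Int.emod_eq_of_lt ha0 haq, Int.emod_eq_of_lt hb0 hbq] at hmod

section

variable {p q t h : ℤ} (hq : 0 < q) (heq : t * q + 1 = h * p)
include hq heq

theorem exists_one_add_mul_emod_eq_of_modEq (hp : 0 < p) {k i : ℤ} (hk1 : 1 ≤ k) (hkq : k ≤ q)
    (hi0 : 0 ≤ i) (hit : i < t) (hk : k ≡ 1 - i * q [ZMOD p]) :
    ∃ j ∈ Set.Ico 0 h, 1 + j * p % q = k := by
  obtain ⟨j, hj⟩ := hk.symm.dvd
  have hjp : j * p = (k - 1) + q * i := by linarith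
  refine ⟨j, ⟨?_, ?_⟩, ?_⟩
  · nlinarith
  · nlinarith
  · rw [hjp, Int.add_mul_emod_self_left, Int.emod_eq_of_lt (by linarith) (by linarith)]
    ring

theorem one_add_mul_emod_mem (hqp : q < p) {j : ℤ} (hj : j ∈ Set.Ico 0 h) :
    let k := 1 + j * p % q
    1 ≤ k ∧ k ≤ q ∧ 1 ≤ k ∧ k ≤ p ∧ ∃ i : ℤ, 0 ≤ i ∧ i < t ∧ k ≡ 1 - i * q [ZMOD p] := by
  obtain ⟨hj0, hjh⟩ := hj
  have hr0 : 0 ≤ j * p % q := Int.emod_nonneg _ hq.ne'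
  have hrq : j * p % q < q := Int.emod_lt_of_pos _ hq
  refine ⟨by omega, by omega, by omega, by omega, j * p / q, ?_, ?_, ?_⟩
  · exact Int.ediv_nonneg (mul_nonneg hj0 (by omega)) hq.le
  · -- `(j p / q) q ≤ j p ≤ (h - 1) p = t q + 1 - p < t q`
    have hfloor : j * p / q * q ≤ j * p := Int.ediv_mul_le _ hq.ne'
    have hjp : j * p ≤ (h - 1) * p := by nlinarith
    nlinarith
  · refine Int.modEq_iff_dvd.mpr ⟨-j, ?_⟩
    linarith [Int.emod_add_mul_ediv (j * p) q]

theorem setOf_modEq_one_sub_mul_eq_image (hqp : q < p) :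
    {k : ℤ | 1 ≤ k ∧ k ≤ q ∧
        1 ≤ k ∧ k ≤ p ∧ ∃ i : ℤ, 0 ≤ i ∧ i < t ∧ k ≡ 1 - i * q [ZMOD p]}
      = (fun j => 1 + j * p % q) '' Set.Ico 0 h := by
  ext k
  constructor
  · rintro ⟨hk1, hkq, -, -, i, hi0, hit, hk⟩
    exact exists_one_add_mul_emod_eq_of_modEq hq heq (by omega) hk1 hkq hi0 hit hk
  · rintro ⟨j, hj, rfl⟩
    exact one_add_mul_emod_mem hq heq hqp hj

end

theorem card_S_le_q_general (p q t h : ℤ) (hq : 2 ≤ q) (hpq : q < p)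
    (hh0 : 0 < h) (hhq : h < q) (hth : h * p - t * q = 1) :
    (t * q + 1) / p = h ∧
    ({k : ℤ | 1 ≤ k ∧ k ≤ q ∧
        1 ≤ k ∧ k ≤ p ∧ ∃ i : ℤ, 0 ≤ i ∧ i < t ∧ k ≡ 1 - i * q [ZMOD p]}.ncard : ℤ) = h := by
  have heq : t * q + 1 = h * p := by linarith
  refine ⟨by rw [heq, Int.mul_ediv_cancel h (by omega)], ?_⟩
  have hinj : Set.InjOn (fun j => 1 + j * p % q) (Set.Ico 0 h) :=
    (add_right_injective 1).comp_injOn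
      ((Int.injOn_mul_emod_Ico ⟨h, -t, by linarith⟩).mono (Set.Ico_subset_Ico_right hhq.le))
  rw [setOf_modEq_one_sub_mul_eq_image (by omega) heq hpq, hinj.ncard_image, ← Finset.coe_Ico,
    Set.ncard_coe_finset, Int.card_Ico]
  omega

theorem card_S_le_q (p q t h : ℤ) (hq : 2 ≤ q) (hpq : q < p) (hcop : Int.gcd p q = 1)
    (ht0 : 0 < t) (htp : t < p) (hh0 : 0 < h) (hhq : h < q) (hth : h * p - t * q = 1) :
    (t * q + 1) / p = h ∧
    ({k : ℤ | 1 ≤ k ∧ k ≤ q ∧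
        1 ≤ k ∧ k ≤ p ∧ ∃ i : ℤ, 0 ≤ i ∧ i < t ∧ k ≡ 1 - i * q [ZMOD p]}.ncard : ℤ) = h :=
  card_S_le_q_general p q t h hq hpq hh0 hhq hth
end

section
/- Let v be a rational-valued function on coprime pairs (p, q) with p > q ≥ 0 satisfying v(a, b) = v(b, a) whenever both sides are defined, v(1, 0) = v(1, q) = 0, and the Feller–Krcatovich recursion v(p, q) = v(p − q, q) − q²/4 if q is even, v(p, q) = v(p − q, q) − (q² − 1)/4 if q is odd (for p > q ≥ 2, interpreting v(p−q, q) as v of the pair sorted in decreasing order). Then for all coprime p > q ≥ 2 with unique (t, h) satisfying 0 < t < p, 0 < h < q, h·p − t·q = 1, and setting p' = max(|p − 2t|, |q − 2h|), q' = min(|p − 2t|, |q − 2h|), one has v(p, q) − v(p', q') = (1 − h·(p − t) − t·(q − h))/2. -/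
/-!
Write `(a, b) = (p - 2t, q - 2h)` for the Batson move of `(p, q)`. Subtracting `q` from `p` takes
the pair `(t, h)` for `(p, q)` to the pair `(t - h, h)` for `(p - q, q)`, whose move is
`(a - b, b)`. Since `b` lies between `0` and `a`, one step of the Feller–Krcatovich recursion
relates `v(a, b)` to `v(a - b, b)` exactly as it relates `v(p, q)` to `v(p - q, q)`, and the two
corrections differ by `h (q - h)`, which is precisely the change of the right-hand side. This is an
induction on `p + q`; the data are symmetric under `(p, q, t, h) ↦ (q, p, q - h, p - t)`, and the
induction ends at pairs containing `1`, where both sides vanish.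
-/

def fkCorrection (q : ℤ) : ℚ := if Even q then (q : ℚ) ^ 2 / 4 else ((q : ℚ) ^ 2 - 1) / 4

@[simp]
theorem fkCorrection_neg (q : ℤ) : fkCorrection (-q) = fkCorrection q := by
  simp [fkCorrection]

@[simp]
theorem fkCorrection_zero : fkCorrection 0 = 0 := by simp [fkCorrection]

@[simp]
theorem fkCorrection_one : fkCorrection 1 = 0 := by norm_num [fkCorrection]

theorem fkCorrection_sub_fkCorrection_sub_two_mul (q h : ℤ) :
    fkCorrection q - fkCorrection (q - 2 * h) = ((h * (q - h) : ℤ) : ℚ) := by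
  by_cases hq : Even q
  · have : Even (q - 2 * h) := hq.sub (even_two_mul h)
    simp only [fkCorrection, if_pos hq, if_pos this]
    push_cast; ring
  · have : ¬Even (q - 2 * h) := fun h' => hq (by simpa using h'.add (even_two_mul h))
    simp only [fkCorrection, if_neg hq, if_neg this]
    push_cast; ring

def onSortedAbs (v : ℤ → ℤ → ℚ) (a b : ℤ) : ℚ := v (max |a| |b|) (min |a| |b|)

section onSortedAbs

variable (v : ℤ → ℤ → ℚ)

theorem onSortedAbs_comm (a b : ℤ) : onSortedAbs v a b = onSortedAbs v b a := by
  rw [onSortedAbs, onSortedAbs, max_comm, min_comm]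

@[simp]
theorem onSortedAbs_neg (a b : ℤ) : onSortedAbs v (-a) (-b) = onSortedAbs v a b := by
  simp [onSortedAbs]

theorem onSortedAbs_of_le {a b : ℤ} (hb : 0 ≤ b) (hba : b ≤ a) :
    onSortedAbs v a b = v a b := by
  rw [onSortedAbs, abs_of_nonneg hb, abs_of_nonneg (hb.trans hba), max_eq_left hba,
    min_eq_right hba]

theorem onSortedAbs_of_nonneg {a b : ℤ} (ha : 0 ≤ a) (hb : 0 ≤ b) :
    onSortedAbs v a b = v (max a b) (min a b) := by
  rw [onSortedAbs, abs_of_nonneg ha, abs_of_nonneg hb]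

end onSortedAbs

structure FellerKrcatovich (v : ℤ → ℤ → ℚ) : Prop where
  symm : ∀ a b, v a b = v b a
  one_zero : v 1 0 = 0
  one_left : ∀ q, v 1 q = 0
  recursion : ∀ p q : ℤ, 2 ≤ q → q < p → Int.gcd p q = 1 →
    v p q = v (max (p - q) q) (min (p - q) q) - fkCorrection q

namespace FellerKrcatovich

variable {v : ℤ → ℤ → ℚ}

theorem onSortedAbs_of_abs_right_eq_one (hv : FellerKrcatovich v)
    {a b : ℤ} (hb : |b| = 1) : onSortedAbs v a b = 0 := by
  rw [onSortedAbs, hb]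
  rcases eq_or_ne a 0 with rfl | ha
  · simpa using hv.one_zero
  · have : 1 ≤ |a| := Int.one_le_abs ha
    rw [max_eq_left this, min_eq_right this, hv.symm, hv.one_left]

theorem onSortedAbs_of_abs_left_eq_one (hv : FellerKrcatovich v)
    {a b : ℤ} (ha : |a| = 1) : onSortedAbs v a b = 0 := by
  rw [onSortedAbs_comm, hv.onSortedAbs_of_abs_right_eq_one ha]

theorem onSortedAbs_eq_onSortedAbs_sub (hv : FellerKrcatovich v)
    {a b : ℤ} (hab : IsCoprime a b) (hb : b ∈ Set.uIcc 0 a) :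
    onSortedAbs v a b = onSortedAbs v (a - b) b - fkCorrection b := by
  wlog hb0 : 0 ≤ b generalizing a b
  · have := this hab.neg_neg (by rw [Set.mem_uIcc] at hb ⊢; omega) (by omega)
    rwa [← neg_sub', onSortedAbs_neg, onSortedAbs_neg, fkCorrection_neg] at this
  rcases eq_or_ne b 0 with rfl | hb0'
  · simp
  have hba : b ≤ a := by rw [Set.mem_uIcc] at hb; omega
  rcases eq_or_ne b 1 with rfl | hb1
  · simp [hv.onSortedAbs_of_abs_right_eq_one]
  have hba' : b < a := by
    refine hba.lt_of_ne fun hab' => ?_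
    subst hab'
    have := Int.isCoprime_iff_gcd_eq_one.mp hab
    rw [Int.gcd_self] at this
    omega
  rw [onSortedAbs_of_le v hb0 hba, onSortedAbs_of_nonneg v (by omega) hb0]
  exact hv.recursion a b (by omega) hba' (Int.isCoprime_iff_gcd_eq_one.mp hab)

end FellerKrcatovich

/-- The ranges `0 ≤ t` and `h ≤ q` are relaxed from `0 < t` and `h < q` so that the pairs
`(1, q)` and `(p, 1)` have data, `(0, 1)` and `(p - 1, 1)`; the induction ends there. -/
structure BatsonPair (p q t h : ℤ) : Prop where
  t_nonneg : 0 ≤ t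
  t_lt : t < p
  h_pos : 0 < h
  h_le : h ≤ q
  det : h * p - t * q = 1

namespace BatsonPair

variable {p q t h : ℤ}

theorem swap (hd : BatsonPair p q t h) : BatsonPair q p (q - h) (p - t) where
  t_nonneg := by linarith [hd.h_le]
  t_lt := by linarith [hd.h_pos]
  h_pos := by linarith [hd.t_lt]
  h_le := by linarith [hd.t_nonneg]
  det := by linear_combination hd.det

theorem sub (hd : BatsonPair p q t h) (hqp : q < p) : BatsonPair (p - q) q (t - h) h := by
  obtain ⟨ht, htp, hh, hhq, hdet⟩ := hd
  have hdet' : h * (p - q) - (t - h) * q = 1 := by linear_combination hdet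
  refine ⟨?_, ?_, hh, hhq, hdet'⟩
  · nlinarith
  · nlinarith

theorem isCoprime (hd : BatsonPair p q t h) : IsCoprime p q :=
  ⟨h, -t, by linear_combination hd.det⟩

theorem isCoprime_move (hd : BatsonPair p q t h) : IsCoprime (p - 2 * t) (q - 2 * h) :=
  ⟨h, -t, by linear_combination hd.det⟩

theorem move_mem_uIcc (hd : BatsonPair p q t h) (hq : 2 ≤ q) (hqp : q < p) :
    q - 2 * h ∈ Set.uIcc 0 (p - 2 * t) := by
  have hht : 0 ≤ t - h := (hd.sub hqp).t_nonneg
  obtain ⟨-, -, hh, -, hdet⟩ := hd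
  have hsub : h * ((p - 2 * t) - (q - 2 * h)) = 1 + (t - h) * (q - 2 * h) := by
    linear_combination hdet
  rw [Set.mem_uIcc]
  rcases le_or_gt 0 (q - 2 * h) with hb | hb
  · left
    refine ⟨hb, ?_⟩
    nlinarith
  · right
    have hth : 1 ≤ t - h := by
      refine lt_of_le_of_ne hht fun hth => ?_
      have : h = 1 := Int.eq_one_of_mul_eq_one_right hh.le
        (show h * (p - q) = 1 by linear_combination hdet - q * hth)
      omega
    refine ⟨?_, hb.le⟩
    nlinarith

end BatsonPair

def BatsonIdentity (v : ℤ → ℤ → ℚ) (p q t h : ℤ) : Prop :=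
  onSortedAbs v p q - onSortedAbs v (p - 2 * t) (q - 2 * h) =
    ((1 - h * (p - t) - t * (q - h) : ℤ) : ℚ) / 2

theorem batsonIdentity_swap_iff (v : ℤ → ℤ → ℚ) (p q t h : ℤ) :
    BatsonIdentity v q p (q - h) (p - t) ↔ BatsonIdentity v p q t h := by
  rw [BatsonIdentity, BatsonIdentity, onSortedAbs_comm v q p,
    show q - 2 * (q - h) = -(q - 2 * h) by ring, show p - 2 * (p - t) = -(p - 2 * t) by ring,
    onSortedAbs_comm v (-(q - 2 * h)), onSortedAbs_neg,
    show 1 - (p - t) * (q - (q - h)) - (q - h) * (p - (p - t)) = 1 - h * (p - t) - t * (q - h)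
      by ring]

namespace FellerKrcatovich

variable {v : ℤ → ℤ → ℚ}

theorem batsonIdentity_one_left (hv : FellerKrcatovich v) (q : ℤ) : BatsonIdentity v 1 q 0 1 := by
  simp [BatsonIdentity, hv.onSortedAbs_of_abs_left_eq_one]

theorem batsonIdentity_of_sub (hv : FellerKrcatovich v) {p q t h : ℤ} (hd : BatsonPair p q t h)
    (hq : 2 ≤ q) (hqp : q < p) (ih : BatsonIdentity v (p - q) q (t - h) h) :
    BatsonIdentity v p q t h := by
  have hpq := hv.onSortedAbs_eq_onSortedAbs_sub hd.isCoprime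
    (Set.mem_uIcc.mpr (Or.inl ⟨by omega, hqp.le⟩))
  have hmove := hv.onSortedAbs_eq_onSortedAbs_sub hd.isCoprime_move (hd.move_mem_uIcc hq hqp)
  have hc := fkCorrection_sub_fkCorrection_sub_two_mul q h
  rw [BatsonIdentity, show p - q - 2 * (t - h) = p - 2 * t - (q - 2 * h) by ring] at ih
  rw [BatsonIdentity]
  push_cast at ih hc ⊢
  linear_combination hpq - hmove + ih - hc

theorem batsonIdentity (hv : FellerKrcatovich v) {p q t h : ℤ} (hd : BatsonPair p q t h) :
    BatsonIdentity v p q t h := by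
  have ⟨ht, htp, hh, hhq, hdet⟩ := hd
  by_cases hp : p = 1
  · subst hp
    obtain rfl : t = 0 := by omega
    obtain rfl : h = 1 := by linarith
    exact hv.batsonIdentity_one_left q
  by_cases hq : q = 1
  · subst hq
    obtain rfl : h = 1 := by omega
    obtain rfl : t = p - 1 := by linarith
    simpa using (batsonIdentity_swap_iff v 1 p 0 1).mpr (hv.batsonIdentity_one_left p)
  rcases lt_trichotomy q p with hqp | rfl | hpq
  · exact hv.batsonIdentity_of_sub hd (by omega) hqp (hv.batsonIdentity (hd.sub hqp))
  · exact absurd (Int.isCoprime_iff_gcd_eq_one.mp hd.isCoprime) (by simp; omega)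
  · exact (batsonIdentity_swap_iff v p q t h).mp <|
      hv.batsonIdentity_of_sub hd.swap (by omega) hpq (hv.batsonIdentity (hd.swap.sub hpq))
termination_by (p + q).toNat
decreasing_by all_goals omega

end FellerKrcatovich

theorem upsilon_batson_move (v : ℤ → ℤ → ℚ)
    (hsym : ∀ a b : ℤ, v a b = v b a)
    (h10 : v 1 0 = 0)
    (h1 : ∀ q : ℤ, v 1 q = 0)
    (hrec : ∀ p q : ℤ, 2 ≤ q → q < p → Int.gcd p q = 1 →
      (Even q → v p q = v (max (p - q) q) (min (p - q) q) - (q : ℚ) ^ 2 / 4) ∧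
      (Odd q → v p q = v (max (p - q) q) (min (p - q) q) - ((q : ℚ) ^ 2 - 1) / 4)) :
    ∀ p q t h : ℤ, 2 ≤ q → q < p → Int.gcd p q = 1 →
      0 < t → t < p → 0 < h → h < q → h * p - t * q = 1 →
      v p q - v (max |p - 2 * t| |q - 2 * h|) (min |p - 2 * t| |q - 2 * h|)
        = ((1 - h * (p - t) - t * (q - h) : ℤ) : ℚ) / 2 := by
  intro p q t h hq hqp _ ht htp hh hhq hdet
  have hv : FellerKrcatovich v := by
    refine ⟨hsym, h10, h1, fun p q hq hqp hpq => ?_⟩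
    rcases Int.even_or_odd q with he | ho
    · rw [fkCorrection, if_pos he, (hrec p q hq hqp hpq).1 he]
    · rw [fkCorrection, if_neg (Int.not_even_iff_odd.mpr ho), (hrec p q hq hqp hpq).2 ho]
  have := hv.batsonIdentity ⟨ht.le, htp, hh, hhq.le, hdet⟩
  rwa [BatsonIdentity, onSortedAbs_of_le v (by omega) hqp.le] at this
end

section
/- Let v be a rational-valued function on coprime pairs satisfying the Feller–Krcatovich recursion (v(p,q) = v(p−q,q) − q²/4 for q even, v(p,q) = v(p−q,q) − (q²−1)/4 for q odd, v symmetric, v(1,n) = 0). Then for every l ≥ 1: v(2l+1, 2l) − v(2l−1, 2l−2) = 1 − 2l, and v(2l+2, 2l+1) − v(2l, 2l−1) = −2l (with the convention v(2,1) = v(1,0) = 0). -/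
/-!
Consecutive pairs `(q + 1, q)` are coprime and one step of the recursion takes them to `(1, q)`,
where `v` vanishes. Hence `v (q + 1) q` is `-q² / 4` for even `q` and `-(q² - 1) / 4` for odd `q`,
and the claimed differences are differences of these closed forms; the only pair not of this shape
is `(1, 0)` at `l = 1`.
-/

section ConsecutivePairs

variable {v : ℤ → ℤ → ℚ} {p q : ℤ}

theorem value_consecutive_of_even (h1 : ∀ n : ℤ, v 1 n = 0)
    (heven : ∀ p q : ℤ, 1 ≤ q → q < p → Int.gcd p q = 1 → Even q →
      v p q = v (p - q) q - (q : ℚ) ^ 2 / 4)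
    (hpq : p = q + 1) (hq : 1 ≤ q) (hq_even : Even q) :
    v p q = -(q : ℚ) ^ 2 / 4 := by
  subst hpq
  rw [heven _ q hq (by omega) (by simp) hq_even, add_sub_cancel_left, h1]
  ring

theorem value_consecutive_of_odd (h1 : ∀ n : ℤ, v 1 n = 0)
    (hodd : ∀ p q : ℤ, 1 ≤ q → q < p → Int.gcd p q = 1 → Odd q →
      v p q = v (p - q) q - ((q : ℚ) ^ 2 - 1) / 4)
    (hpq : p = q + 1) (hq : 1 ≤ q) (hq_odd : Odd q) :
    v p q = -((q : ℚ) ^ 2 - 1) / 4 := by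
  subst hpq
  rw [hodd _ q hq (by omega) (by simp) hq_odd, add_sub_cancel_left, h1]
  ring

end ConsecutivePairs

theorem upsilon_consecutive_diff_general (v : ℤ → ℤ → ℚ)
    (h1 : ∀ n : ℤ, v 1 n = 0)
    (h10 : v 1 0 = 0)
    (heven : ∀ p q : ℤ, 1 ≤ q → q < p → Int.gcd p q = 1 → Even q →
      v p q = v (p - q) q - (q : ℚ) ^ 2 / 4)
    (hodd : ∀ p q : ℤ, 1 ≤ q → q < p → Int.gcd p q = 1 → Odd q →
      v p q = v (p - q) q - ((q : ℚ) ^ 2 - 1) / 4) :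
    ∀ l : ℤ, 1 ≤ l →
      v (2 * l + 1) (2 * l) - v (2 * l - 1) (2 * l - 2) = 1 - 2 * (l : ℚ) ∧
      v (2 * l + 2) (2 * l + 1) - v (2 * l) (2 * l - 1) = -(2 * (l : ℚ)) := by
  intro l hl
  have hA := value_consecutive_of_even h1 heven (p := 2 * l + 1) rfl (by omega) (even_two_mul l)
  have hB : v (2 * l - 1) (2 * l - 2) = -((2 * l - 2 : ℤ) : ℚ) ^ 2 / 4 := by
    rcases hl.eq_or_lt with rfl | hl
    · simp [h10]
    · exact value_consecutive_of_even h1 heven (by ring) (by omega) ⟨l - 1, by ring⟩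
  have hC := value_consecutive_of_odd h1 hodd (p := 2 * l + 2) (by ring) (by omega)
    (odd_two_mul_add_one l)
  have hD := value_consecutive_of_odd h1 hodd (p := 2 * l) (q := 2 * l - 1) (by ring) (by omega)
    ⟨l - 1, by ring⟩
  rw [hA, hB, hC, hD]
  constructor <;> push_cast <;> ring

theorem upsilon_consecutive_diff (v : ℤ → ℤ → ℚ)
    (hsym : ∀ a b : ℤ, v a b = v b a)
    (h1 : ∀ n : ℤ, v 1 n = 0)
    (h21 : v 2 1 = 0)
    (h10 : v 1 0 = 0)
    (heven : ∀ p q : ℤ, 1 ≤ q → q < p → Int.gcd p q = 1 → Even q →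
      v p q = v (p - q) q - (q : ℚ) ^ 2 / 4)
    (hodd : ∀ p q : ℤ, 1 ≤ q → q < p → Int.gcd p q = 1 → Odd q →
      v p q = v (p - q) q - ((q : ℚ) ^ 2 - 1) / 4) :
    ∀ l : ℤ, 1 ≤ l →
      v (2 * l + 1) (2 * l) - v (2 * l - 1) (2 * l - 2) = 1 - 2 * (l : ℚ) ∧
      v (2 * l + 2) (2 * l + 1) - v (2 * l) (2 * l - 1) = -(2 * (l : ℚ)) :=
  upsilon_consecutive_diff_general v h1 h10 heven hodd
end
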